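/- Let T : [0,∞) → [0,∞) be differentiable with T' ≥ 0 and T'' ≥ 0, and let λᵢ ≥ λⱼ > 0. Define gₖ(C) = 1 - 1/(1 + λₖ·T(C)). If gⱼ''(C) < 0 at some point C, then gᵢ''(C) < 0 at that point. -/

import Mathlib

/-!
Writing `D = 1 + λ T`, one has `gₖ'' = λ / D² · (T'' - 2 λ / D · T'²)`, so for `λ > 0` the sign of
`gₖ''` is that of `T'' - 2 λ / (1 + λ T) · T'²`. For `T ≥ 0` the coefficient `λ ↦ λ / (1 + λ T)` is
monotone, so increasing `λ` can only make this quantity smaller.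
-/

theorem hasDerivAt_one_sub_one_div_one_add_mul {T : ℝ → ℝ} {t x : ℝ} (lam : ℝ)
    (hT : HasDerivAt T t x) (hD : 1 + lam * T x ≠ 0) :
    HasDerivAt (fun y => 1 - 1 / (1 + lam * T y)) (lam * t / (1 + lam * T x) ^ 2) x := by
  have hden : HasDerivAt (fun y => 1 + lam * T y) (lam * t) x := (hT.const_mul lam).const_add 1
  simpa only [one_div, Pi.inv_apply, neg_div, neg_neg] using (hden.inv hD).const_sub 1

theorem deriv_deriv_one_sub_one_div_one_add_mul {T T' : ℝ → ℝ} {t'' C : ℝ} (lam : ℝ)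
    (hT : ∀ x, HasDerivAt T (T' x) x) (hT' : HasDerivAt T' t'' C) (hD : 1 + lam * T C ≠ 0) :
    deriv (deriv (fun x => 1 - 1 / (1 + lam * T x))) C =
      lam / (1 + lam * T C) ^ 2 * (t'' - 2 * (lam / (1 + lam * T C)) * T' C ^ 2) := by
  have hTcont : Continuous T := continuous_iff_continuousAt.2 fun x => (hT x).continuousAt
  have hcont : Continuous fun x => 1 + lam * T x := by fun_prop
  have hfirst : deriv (fun x => 1 - 1 / (1 + lam * T x))
      =ᶠ[nhds C] fun x => lam * T' x / (1 + lam * T x) ^ 2 := by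
    filter_upwards [hcont.continuousAt.eventually_ne hD] with x hx
    exact (hasDerivAt_one_sub_one_div_one_add_mul lam (hT x) hx).deriv
  have hden : HasDerivAt (fun x => (1 + lam * T x) ^ 2) (2 * (1 + lam * T C) * (lam * T' C)) C := by
    refine ((((hT C).const_mul lam).const_add 1).pow 2).congr_deriv ?_
    norm_num
  rw [hfirst.deriv_eq, ((hT'.const_mul lam).fun_div hden (pow_ne_zero 2 hD)).deriv]
  field_simp

theorem monotoneOn_div_one_add_mul {t : ℝ} (ht : 0 ≤ t) :
    MonotoneOn (fun l : ℝ => l / (1 + l * t)) (Set.Ici 0) := by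
  intro a (ha : 0 ≤ a) b _ hab
  have hb : 0 ≤ b := ha.trans hab
  rw [div_le_div_iff₀ (by positivity) (by positivity)]
  nlinarith

theorem fifo_concavity_ordering_general (T T' T'' : ℝ → ℝ)
    (hT : ∀ x, HasDerivAt T (T' x) x)
    (hT' : ∀ x, HasDerivAt T' (T'' x) x)
    (hTnonneg : ∀ x, 0 ≤ x → 0 ≤ T x)
    (lami lamj : ℝ) (hlamj : 0 < lamj) (hle : lamj ≤ lami)
    (C : ℝ) (hC : 0 ≤ C)
    (hj : deriv (deriv (fun x => 1 - 1 / (1 + lamj * T x))) C < 0) :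
    deriv (deriv (fun x => 1 - 1 / (1 + lami * T x))) C < 0 := by
  have ht : 0 ≤ T C := hTnonneg C hC
  have hlami : 0 < lami := hlamj.trans_le hle
  rw [deriv_deriv_one_sub_one_div_one_add_mul lamj hT (hT' C) (by positivity)] at hj
  rw [deriv_deriv_one_sub_one_div_one_add_mul lami hT (hT' C) (by positivity)]
  have hj' : T'' C - 2 * (lamj / (1 + lamj * T C)) * T' C ^ 2 < 0 :=
    neg_of_mul_neg_right hj (by positivity)
  have hcoeff : lamj / (1 + lamj * T C) ≤ lami / (1 + lami * T C) :=
    monotoneOn_div_one_add_mul ht hlamj.le (hlamj.le.trans hle) hle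
  refine mul_neg_of_pos_of_neg (by positivity) ?_
  nlinarith [sq_nonneg (T' C)]

theorem fifo_concavity_ordering (T T' T'' : ℝ → ℝ)
    (hT : ∀ x, HasDerivAt T (T' x) x)
    (hT' : ∀ x, HasDerivAt T' (T'' x) x)
    (hT'nonneg : ∀ x, 0 ≤ T' x)
    (hT''nonneg : ∀ x, 0 ≤ T'' x)
    (hTnonneg : ∀ x, 0 ≤ x → 0 ≤ T x)
    (lami lamj : ℝ) (hlamj : 0 < lamj) (hle : lamj ≤ lami)
    (C : ℝ) (hC : 0 ≤ C)
    (hj : deriv (deriv (fun x => 1 - 1 / (1 + lamj * T x))) C < 0) :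
    deriv (deriv (fun x => 1 - 1 / (1 + lami * T x))) C < 0 :=
  fifo_concavity_ordering_general T T' T'' hT hT' hTnonneg lami lamj hlamj hle C hC hj
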